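/- arXiv:1708.08783 — 2 statements merged into one kernel-verified Lean document; each statement's English description precedes it below -/
import Mathlib

section
/- Fix N ≥ 1 and consider the complex vector space with basis {φ_{(j,k)} : (j,k) ∈ (ℤ/Nℤ)²}. Define linear operators ρ(T) and ρ(S) by ρ(T)φ_{(j,k)} = e(jk/N)·φ_{(j,k)} and ρ(S)φ_{(j,k)} = (1/N)·Σ_{(j',k') ∈ (ℤ/Nℤ)²} e(-(jk'+j'k)/N)·φ_{(j',k')}, where e(x) = exp(2πix). Then for every positive divisor d of N, the vector v_d = Σ_{0≤j≤(N/d)-1} Σ_{0≤k≤d-1} φ_{(jd, kN/d)} satisfies ρ(T)v_d = v_d and ρ(S)v_d = v_d. -/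
open Finset

/-- `e(x) = exp(2πix)`. -/
noncomputable def eTwoPi (x : ℝ) : ℂ := Complex.exp (2 * Real.pi * Complex.I * x)

/-- The Weil representation operator `ρ(T)` on `ℂ[(ℤ/Nℤ)²]`:
`ρ(T)φ_{(j,k)} = e(jk/N) φ_{(j,k)}`. -/
noncomputable def rhoT (N : ℕ) (f : ZMod N × ZMod N → ℂ) : ZMod N × ZMod N → ℂ :=
  fun p => eTwoPi (((p.1.val * p.2.val : ℕ) : ℝ) / N) * f p

/-- The Weil representation operator `ρ(S)` on `ℂ[(ℤ/Nℤ)²]`: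
`ρ(S)φ_{(j,k)} = (1/N) Σ_{(j',k')} e(-(jk'+j'k)/N) φ_{(j',k')}`. -/
noncomputable def rhoS (N : ℕ) [NeZero N] (f : ZMod N × ZMod N → ℂ) : ZMod N × ZMod N → ℂ :=
  fun p' => (1 / (N : ℂ)) *
    ∑ p : ZMod N × ZMod N,
      eTwoPi (-(((p.1.val * p'.2.val + p'.1.val * p.2.val : ℕ) : ℝ) / N)) * f p

/-- The vector `v_d = Σ_{0≤j<N/d} Σ_{0≤k<d} φ_{(jd, kN/d)}` for a divisor `d` of `N`. -/
noncomputable def weilVec (N d : ℕ) : ZMod N × ZMod N → ℂ :=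
  ∑ j ∈ Finset.range (N / d), ∑ k ∈ Finset.range d,
    Pi.single (((j * d : ℕ) : ZMod N), ((k * (N / d) : ℕ) : ZMod N)) (1 : ℂ)

/-! `v_d` is the indicator function of the subgroup `dℤ/Nℤ × (N/d)ℤ/Nℤ`. On that subgroup
`N ∣ jk`, so `ρ(T)` fixes `v_d`. For `ρ(S)`, with `N = dm`, the phase at a point `(jd, km)` of the
subgroup factors as `e(-jb/m) e(-ka/d)`, so `(ρ(S)v_d)(a, b)` is `1/N` times a product of two
geometric sums of roots of unity, `m·[m ∣ b]` and `d·[d ∣ a]`, which is `v_d(a, b)`. -/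

lemma eTwoPi_add (x y : ℝ) : eTwoPi (x + y) = eTwoPi x * eTwoPi y := by
  simp only [eTwoPi, ← Complex.exp_add]
  push_cast
  ring_nf

lemma eTwoPi_natCast (n : ℕ) : eTwoPi n = 1 := by
  rw [eTwoPi, ← Complex.exp_nat_mul_two_pi_mul_I n]
  push_cast
  ring_nf

lemma sum_range_eTwoPi_mul_div {m : ℕ} (hm : m ≠ 0) (b : ℤ) :
    ∑ j ∈ range m, eTwoPi (j * b / m) = if (m : ℤ) ∣ b then (m : ℂ) else 0 := by
  have hprim := Complex.isPrimitiveRoot_exp m hm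
  set ζ := Complex.exp (2 * Real.pi * Complex.I / m) ^ b
  have hpow (j : ℕ) : eTwoPi (j * b / m) = ζ ^ j := by
    rw [← zpow_natCast, ← zpow_mul, ← Complex.exp_int_mul, eTwoPi]
    congr 1
    push_cast
    ring
  have hζm : ζ ^ m = 1 := by
    rw [← zpow_natCast, ← zpow_mul, mul_comm b, zpow_mul, zpow_natCast, hprim.pow_eq_one, one_zpow]
  simp only [hpow]
  split_ifs with hdvd
  · simp [ζ, (hprim.zpow_eq_one_iff_dvd b).2 hdvd]
  · have hζ : ζ ≠ 1 := fun h => hdvd ((hprim.zpow_eq_one_iff_dvd b).1 h)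
    rw [geom_sum_eq hζ, hζm, sub_self, zero_div]

section

variable {N d m : ℕ} [NeZero N]

lemma pos_and_pos_of_mul_eq (hdm : d * m = N) : 0 < d ∧ 0 < m :=
  CanonicallyOrderedAdd.mul_pos.1 (hdm ▸ Nat.pos_of_neZero N)

lemma mul_lt_of_mem_range (hdm : d * m = N) {j : ℕ} (hj : j ∈ range m) : j * d < N :=
  hdm ▸ mul_comm m d ▸ Nat.mul_lt_mul_of_pos_right (mem_range.1 hj) (pos_and_pos_of_mul_eq hdm).1

lemma sum_range_ite_eq_natCast_mul (hdm : d * m = N) (x : ZMod N) :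
    ∑ j ∈ range m, (if x = ((j * d : ℕ) : ZMod N) then (1 : ℂ) else 0) =
      if d ∣ x.val then 1 else 0 := by
  obtain ⟨hd, -⟩ := pos_and_pos_of_mul_eq hdm
  have hx : x.val < m * d := mul_comm d m ▸ hdm ▸ x.val_lt
  have hx_eq (j : ℕ) (hj : j ∈ range m) :
      x = ((j * d : ℕ) : ZMod N) ↔ d ∣ x.val ∧ x.val / d = j := by
    rw [← (ZMod.val_injective N).eq_iff, ZMod.val_cast_of_lt (mul_lt_of_mem_range hdm hj)]
    constructor
    · rintro h
      exact ⟨h ▸ dvd_mul_left d j, by rw [h, Nat.mul_div_cancel _ hd]⟩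
    · rintro ⟨hdvd, rfl⟩
      exact (Nat.div_mul_cancel hdvd).symm
  rw [sum_congr rfl fun j hj => if_congr (hx_eq j hj) rfl rfl]
  by_cases hdvd : d ∣ x.val
  · simp only [hdvd, true_and, sum_ite_eq, mem_range, (Nat.div_lt_iff_lt_mul hd).2 hx, if_true]
  · simp [hdvd]

lemma weilVec_apply (hdm : d * m = N) (p : ZMod N × ZMod N) :
    weilVec N d p = if d ∣ p.1.val ∧ m ∣ p.2.val then 1 else 0 := by
  obtain ⟨hd, -⟩ := pos_and_pos_of_mul_eq hdm
  have hNd : N / d = m := by rw [← hdm, Nat.mul_div_cancel_left m hd]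
  calc weilVec N d p
      = ∑ j ∈ range m, ∑ k ∈ range d, (if p.1 = ((j * d : ℕ) : ZMod N) then (1 : ℂ) else 0) *
          (if p.2 = ((k * m : ℕ) : ZMod N) then 1 else 0) := by
        simp only [weilVec, hNd, Finset.sum_apply, Pi.single_apply, Prod.ext_iff,
          ite_zero_mul_ite_zero, mul_one]
    _ = if d ∣ p.1.val ∧ m ∣ p.2.val then 1 else 0 := by
        rw [← sum_mul_sum, sum_range_ite_eq_natCast_mul hdm,
          sum_range_ite_eq_natCast_mul ((mul_comm m d).trans hdm), ite_zero_mul_ite_zero, mul_one]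

lemma rhoT_weilVec_apply (hdm : d * m = N) (p : ZMod N × ZMod N) :
    rhoT N (weilVec N d) p = weilVec N d p := by
  obtain ⟨hd, hm⟩ := pos_and_pos_of_mul_eq hdm
  rw [rhoT, weilVec_apply hdm]
  split_ifs with hp
  · obtain ⟨⟨j, hj⟩, ⟨k, hk⟩⟩ := hp
    have hphase : ((p.1.val * p.2.val : ℕ) : ℝ) / N = ((j * k : ℕ) : ℝ) := by
      rw [hj, hk, ← hdm]
      push_cast
      field_simp
    rw [hphase, eTwoPi_natCast, mul_one]
  · rw [mul_zero]

lemma rhoS_sum {ι : Type*} (s : Finset ι) (f : ι → ZMod N × ZMod N → ℂ) :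
    rhoS N (∑ i ∈ s, f i) = ∑ i ∈ s, rhoS N (f i) := by
  funext p
  simp only [rhoS, Finset.sum_apply, mul_sum]
  exact sum_comm

lemma rhoS_single_apply (q p : ZMod N × ZMod N) :
    rhoS N (Pi.single q 1) p =
      1 / N * eTwoPi (-(((q.1.val * p.2.val + p.1.val * q.2.val : ℕ) : ℝ) / N)) := by
  simp only [rhoS, Pi.single_apply, mul_ite, mul_one, mul_zero, sum_ite_eq', mem_univ, if_true]

lemma rhoS_weilVec_apply (hdm : d * m = N) (p : ZMod N × ZMod N) :
    rhoS N (weilVec N d) p = if d ∣ p.1.val ∧ m ∣ p.2.val then 1 else 0 := by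
  obtain ⟨hd, hm⟩ := pos_and_pos_of_mul_eq hdm
  have hNd : N / d = m := by rw [← hdm, Nat.mul_div_cancel_left m hd]
  have hphase : ∀ j ∈ range m, ∀ k ∈ range d,
      rhoS N (Pi.single (((j * d : ℕ) : ZMod N), ((k * m : ℕ) : ZMod N)) 1) p =
        1 / N * (eTwoPi (j * (-p.2.val : ℤ) / m) * eTwoPi (k * (-p.1.val : ℤ) / d)) := by
    intro j hj k hk
    have hN : (N : ℝ) = d * m := by exact_mod_cast hdm.symm
    rw [rhoS_single_apply, ZMod.val_cast_of_lt (mul_lt_of_mem_range hdm hj),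
      ZMod.val_cast_of_lt (mul_lt_of_mem_range ((mul_comm m d).trans hdm) hk), ← eTwoPi_add]
    congr 2
    push_cast
    rw [hN]
    field_simp
    ring
  simp only [weilVec, hNd, rhoS_sum, Finset.sum_apply]
  rw [sum_congr rfl fun j hj => sum_congr rfl (hphase j hj)]
  simp only [← mul_sum, ← sum_mul]
  rw [sum_range_eTwoPi_mul_div hm.ne', sum_range_eTwoPi_mul_div hd.ne']
  simp only [Int.dvd_neg, Int.natCast_dvd_natCast]
  rw [mul_comm (if m ∣ _ then _ else _), ite_zero_mul_ite_zero, mul_ite, mul_zero, ← Nat.cast_mul,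
    hdm, one_div, inv_mul_cancel₀ (NeZero.ne (N : ℂ))]

end

theorem weilVec_invariant_general (N : ℕ) [NeZero N] (d : ℕ) (hd : d ∈ N.divisors) :
    rhoT N (weilVec N d) = weilVec N d ∧ rhoS N (weilVec N d) = weilVec N d := by
  obtain ⟨m, hdm⟩ := (Nat.mem_divisors.1 hd).1
  exact ⟨funext (rhoT_weilVec_apply hdm.symm),
    funext fun p => (rhoS_weilVec_apply hdm.symm p).trans (weilVec_apply hdm.symm p).symm⟩

/-- For every positive divisor `d` of `N`, the vector `v_d` is invariant under
both `ρ(T)` and `ρ(S)`. -/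
theorem weilVec_invariant (N : ℕ) [NeZero N] (hN : 1 ≤ N) (d : ℕ) (hd : d ∈ N.divisors) :
    rhoT N (weilVec N d) = weilVec N d ∧ rhoS N (weilVec N d) = weilVec N d :=
  weilVec_invariant_general N d hd
end

section
/- Fix N ≥ 1. The vectors v_d = Σ_{0≤j≤(N/d)-1} Σ_{0≤k≤d-1} φ_{(jd, kN/d)}, indexed by the positive divisors d of N, are linearly independent in the complex vector space with basis {φ_{(j,k)} : (j,k) ∈ (ℤ/Nℤ)²}. -/
open Finset

/-- The vector `v_d = Σ_{0≤j<N/d} Σ_{0≤k<d} φ_{(jd, kN/d)}` for a divisor `d` of `N`. -/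
noncomputable def weilVec8 (N d : ℕ) : ZMod N × ZMod N → ℂ :=
  ∑ j ∈ Finset.range (N / d), ∑ k ∈ Finset.range d,
    Pi.single (((j * d : ℕ) : ZMod N), ((k * (N / d) : ℕ) : ZMod N)) (1 : ℂ)

lemma weil8_div_dvd_div {N a b : ℕ} (hb : b ∣ N) (hab : a ∣ b) : N / b ∣ N / a := by
  rcases Nat.eq_zero_or_pos a with rfl | ha0
  · simp at hab; subst hab; simp
  obtain ⟨t, rfl⟩ := hab
  have hN' : N = a * (t * (N / (a * t))) := by
    rw [← mul_assoc, Nat.mul_div_cancel' hb]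
  have h2 : N / a = t * (N / (a * t)) := by
    conv_lhs => rw [hN']
    rw [Nat.mul_div_cancel_left _ ha0]
  rw [h2]
  exact dvd_mul_left _ _

lemma weil8_indic (N e d : ℕ) (hN : 0 < N) (he : e ∣ N) (hd : d ∣ N) :
    (∑ j ∈ Finset.range (N / e),
      if ((j * e : ℕ) : ZMod N) = ((d : ℕ) : ZMod N) then (1 : ℂ) else 0)
      = if e ∣ d then 1 else 0 := by
  have he0 : 0 < e := Nat.pos_of_dvd_of_pos he hN
  set m := N / e with hm
  have hme : m * e = N := Nat.div_mul_cancel he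
  have hm0 : 0 < m := Nat.div_pos (Nat.le_of_dvd hN he) he0
  by_cases hed : e ∣ d
  · rw [if_pos hed]
    obtain ⟨c, rfl⟩ := hed
    have key : ∀ j ∈ Finset.range m,
        (if ((j * e : ℕ) : ZMod N) = ((e * c : ℕ) : ZMod N) then (1 : ℂ) else 0)
          = if j = c % m then 1 else 0 := by
      intro j hj
      refine if_congr ?_ rfl rfl
      rw [ZMod.natCast_eq_natCast_iff]
      unfold Nat.ModEq
      rw [← hme, Nat.mul_mod_mul_right, mul_comm e c, Nat.mul_mod_mul_right,
        Nat.mod_eq_of_lt (Finset.mem_range.mp hj)]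
      exact mul_left_inj' he0.ne'
    rw [Finset.sum_congr rfl key, Finset.sum_ite_eq' (Finset.range m) (c % m) (fun _ => (1:ℂ))]
    rw [if_pos (Finset.mem_range.mpr (Nat.mod_lt _ hm0))]
  · rw [if_neg hed]
    apply Finset.sum_eq_zero
    intro j hj
    rw [if_neg]
    intro h
    apply hed
    rw [ZMod.natCast_eq_natCast_iff] at h
    have h2 : (e : ℤ) ∣ (d : ℤ) - (j : ℤ) * (e : ℤ) :=
      dvd_trans (Int.natCast_dvd_natCast.mpr he) (by exact_mod_cast h.dvd)
    have h3 : (e : ℤ) ∣ (d : ℤ) := by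
      simpa using dvd_add h2 (dvd_mul_left (e : ℤ) (j : ℤ))
    exact_mod_cast h3

lemma weil8_eval (N d e : ℕ) (hN : 0 < N) (hd : d ∣ N) (he : e ∣ N) :
    weilVec8 N e (((d : ℕ) : ZMod N), ((N / d : ℕ) : ZMod N)) = if e = d then 1 else 0 := by
  have hsum : weilVec8 N e (((d : ℕ) : ZMod N), ((N / d : ℕ) : ZMod N)) =
      ∑ j ∈ Finset.range (N / e), ∑ k ∈ Finset.range e,
        ((if ((j * e : ℕ) : ZMod N) = ((d : ℕ) : ZMod N) then (1:ℂ) else 0) *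
         (if ((k * (N / e) : ℕ) : ZMod N) = ((N / d : ℕ) : ZMod N) then (1:ℂ) else 0)) := by
    unfold weilVec8
    rw [Finset.sum_apply]
    refine Finset.sum_congr rfl fun j _ => ?_
    rw [Finset.sum_apply]
    refine Finset.sum_congr rfl fun k _ => ?_
    rw [Pi.single_apply]
    have hsplit : ∀ (A B : Prop) [Decidable A] [Decidable B],
        (if A ∧ B then (1:ℂ) else 0) = (if A then (1:ℂ) else 0) * (if B then 1 else 0) := by
      intro A B _ _; split_ifs <;> simp_all
    rw [← hsplit]
    refine if_congr ?_ rfl rfl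
    simp only [Prod.mk.injEq]
    constructor <;> rintro ⟨a, b⟩ <;> exact ⟨a.symm, b.symm⟩
  rw [hsum, ← Finset.sum_mul_sum]
  have hNe : N / (N / e) = e := Nat.div_div_self he hN.ne'
  have hS1 := weil8_indic N e d hN he hd
  have hS2 := weil8_indic N (N / e) (N / d) hN (Nat.div_dvd_of_dvd he) (Nat.div_dvd_of_dvd hd)
  rw [hNe] at hS2
  rw [hS1, hS2]
  by_cases hed : e = d
  · subst hed; simp
  · rw [if_neg hed]
    by_cases h1 : e ∣ d <;> by_cases h2 : N / e ∣ N / d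
    · exfalso
      apply hed
      have : d ∣ e := by
        have := weil8_div_dvd_div (Nat.div_dvd_of_dvd hd) h2
        rwa [hNe, Nat.div_div_self hd hN.ne'] at this
      exact Nat.dvd_antisymm h1 this
    all_goals simp [h1, h2]

/-- The vectors `v_d`, indexed by the positive divisors `d` of `N`, are linearly
independent in `ℂ[(ℤ/Nℤ)²]`. -/
theorem weilVec_linearIndependent (N : ℕ) (hN : 1 ≤ N) :
    LinearIndependent ℂ (fun d : N.divisors => weilVec8 N d) := by
  rw [Fintype.linearIndependent_iff]
  intro g hg i
  obtain ⟨d, hd⟩ := i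
  have hdN : d ∣ N := (Nat.mem_divisors.mp hd).1
  have := congrFun hg (((d : ℕ) : ZMod N), ((N / d : ℕ) : ZMod N))
  rw [Finset.sum_apply] at this
  simp only [Pi.smul_apply, smul_eq_mul] at this
  have heval : ∀ i : N.divisors,
      g i * weilVec8 N i (((d : ℕ) : ZMod N), ((N / d : ℕ) : ZMod N))
        = if i = (⟨d, hd⟩ : N.divisors) then g i else 0 := by
    intro i
    rw [weil8_eval N d i hN (Nat.mem_divisors.mp hd).1 (Nat.mem_divisors.mp i.2).1]
    by_cases h : (i : ℕ) = d
    · rw [if_pos h, if_pos (Subtype.ext h), mul_one]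
    · rw [if_neg h, if_neg (fun hh => h (congrArg Subtype.val hh)), mul_zero]
  rw [Finset.sum_congr rfl (fun i _ => heval i), Finset.sum_ite_eq'] at this
  simpa using this
end
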